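/- arXiv:1809.10385 — 2 statements merged into one kernel-verified Lean document; each statement's English description precedes it below -/
import Mathlib

section
/- There exist Lamé parameters λ₁, λ₂, μ₁, μ₂ satisfying the stability conditions (μᵢ > 0 and λᵢ + (2/3)μᵢ ≥ 0) with λ₁ = λ₂, such that the Backus-average coefficients of the corresponding periodic isotropic two-layered medium satisfy c1212 ≠ c2323, c1111 ≠ c3333 and c1122 = c1133; that is, a transversely isotropic equivalent medium with c1212 ≠ c2323, c1111 ≠ c3333 and c1133 = c1111 − 2·c1212 exists. -/
/-!
When λ₁ = λ₂ = λ the factor λ comes out of the averages, so c1133 = c1122 = λ. In general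
c1111 − c1122 = 2·c1212, hence c1111 = λ + 2⟨μ⟩ = ⟨λ + 2μ⟩, whereas c3333 is the harmonic mean of
λ + 2μ and c2323 that of μ. For μ₁ ≠ μ₂ the arithmetic–harmonic mean inequality is strict, which
separates c1111 from c3333 and c1212 from c2323; λ = 0, μ₁ = 1, μ₂ = 2 is one such medium.
-/

open Filter Real

noncomputable section

/-- Arithmetic average of two values (equal layer thickness). -/
def avg2 (x y : ℝ) : ℝ := (x + y) / 2

/-- Backus-average coefficient c1111 of a PITL medium. -/
def c1111 (l1 l2 m1 m2 : ℝ) : ℝ :=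
  (avg2 (l1 / (l1 + 2 * m1)) (l2 / (l2 + 2 * m2))) ^ 2
      * (avg2 (1 / (l1 + 2 * m1)) (1 / (l2 + 2 * m2)))⁻¹
    + avg2 (4 * (l1 + m1) * m1 / (l1 + 2 * m1)) (4 * (l2 + m2) * m2 / (l2 + 2 * m2))

/-- Backus-average coefficient c1122 of a PITL medium. -/
def c1122 (l1 l2 m1 m2 : ℝ) : ℝ :=
  (avg2 (l1 / (l1 + 2 * m1)) (l2 / (l2 + 2 * m2))) ^ 2
      * (avg2 (1 / (l1 + 2 * m1)) (1 / (l2 + 2 * m2)))⁻¹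
    + avg2 (2 * l1 * m1 / (l1 + 2 * m1)) (2 * l2 * m2 / (l2 + 2 * m2))

/-- Backus-average coefficient c1133 of a PITL medium. -/
def c1133 (l1 l2 m1 m2 : ℝ) : ℝ :=
  avg2 (l1 / (l1 + 2 * m1)) (l2 / (l2 + 2 * m2))
    * (avg2 (1 / (l1 + 2 * m1)) (1 / (l2 + 2 * m2)))⁻¹

/-- Backus-average coefficient c3333 of a PITL medium. -/
def c3333 (l1 l2 m1 m2 : ℝ) : ℝ :=
  (avg2 (1 / (l1 + 2 * m1)) (1 / (l2 + 2 * m2)))⁻¹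

/-- Backus-average coefficient c2323 of a PITL medium. -/
def c2323 (_l1 _l2 m1 m2 : ℝ) : ℝ := (avg2 (1 / m1) (1 / m2))⁻¹

/-- Backus-average coefficient c1212 of a PITL medium. -/
def c1212 (_l1 _l2 m1 m2 : ℝ) : ℝ := avg2 m1 m2

/-- The anisotropy parameter φ of the Backus-average medium. -/
def phi (l1 l2 m1 m2 : ℝ) : ℝ :=
  (c1122 l1 l2 m1 m2 - c1133 l1 l2 m1 m2) / (2 * c1122 l1 l2 m1 m2)

end

section TwoLayerBackus

variable {l l1 l2 m1 m2 : ℝ}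

theorem harmonic_lt_avg2 {a b : ℝ} (ha : 0 < a) (hb : 0 < b) (hab : a ≠ b) :
    (avg2 (1 / a) (1 / b))⁻¹ < avg2 a b := by
  have hsq : 0 < (a - b) ^ 2 := by positivity [sub_ne_zero.mpr hab]
  unfold avg2
  rw [inv_lt_comm₀ (by positivity) (by positivity)]
  field_simp
  nlinarith

theorem c1111_sub_c1122 (h1 : l1 + 2 * m1 ≠ 0) (h2 : l2 + 2 * m2 ≠ 0) :
    c1111 l1 l2 m1 m2 - c1122 l1 l2 m1 m2 = 2 * c1212 l1 l2 m1 m2 := by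
  unfold c1111 c1122 c1212 avg2
  field_simp
  ring

theorem c1133_const_lambda (h1 : 0 < l + 2 * m1) (h2 : 0 < l + 2 * m2) : c1133 l l m1 m2 = l := by
  unfold c1133 avg2
  field_simp

theorem c1122_const_lambda (h1 : 0 < l + 2 * m1) (h2 : 0 < l + 2 * m2) : c1122 l l m1 m2 = l := by
  unfold c1122 avg2
  field_simp
  ring

theorem c1111_const_lambda (h1 : 0 < l + 2 * m1) (h2 : 0 < l + 2 * m2) :
    c1111 l l m1 m2 = avg2 (l + 2 * m1) (l + 2 * m2) := by
  have h := c1111_sub_c1122 h1.ne' h2.ne'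
  rw [c1122_const_lambda h1 h2] at h
  unfold c1212 avg2 at *
  linarith

theorem c1212_ne_c2323 (hm1 : 0 < m1) (hm2 : 0 < m2) (hm : m1 ≠ m2) :
    c1212 l1 l2 m1 m2 ≠ c2323 l1 l2 m1 m2 :=
  (harmonic_lt_avg2 hm1 hm2 hm).ne'

theorem c1111_ne_c3333_const_lambda (h1 : 0 < l + 2 * m1) (h2 : 0 < l + 2 * m2)
    (hm : m1 ≠ m2) :
    c1111 l l m1 m2 ≠ c3333 l l m1 m2 := by
  rw [c1111_const_lambda h1 h2]
  exact (harmonic_lt_avg2 h1 h2 (by contrapose! hm; linarith)).ne'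

end TwoLayerBackus

/-- There exist Lamé parameters satisfying the stability conditions
with λ₁ = λ₂ such that c1212 ≠ c2323, c1111 ≠ c3333 and c1122 = c1133
(equivalently, c1133 = c1111 − 2·c1212). -/
theorem stmt5 :
    ∃ l1 l2 m1 m2 : ℝ,
      0 < m1 ∧ 0 < m2 ∧ 0 ≤ l1 + (2 / 3) * m1 ∧ 0 ≤ l2 + (2 / 3) * m2 ∧
      l1 = l2 ∧
      c1212 l1 l2 m1 m2 ≠ c2323 l1 l2 m1 m2 ∧
      c1111 l1 l2 m1 m2 ≠ c3333 l1 l2 m1 m2 ∧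
      c1122 l1 l2 m1 m2 = c1133 l1 l2 m1 m2 ∧
      c1133 l1 l2 m1 m2 = c1111 l1 l2 m1 m2 - 2 * c1212 l1 l2 m1 m2 := by
  have h1 : (0 : ℝ) < 0 + 2 * 1 := by norm_num
  have h2 : (0 : ℝ) < 0 + 2 * 2 := by norm_num
  have hm : (1 : ℝ) ≠ 2 := by norm_num
  have hsplit := c1111_sub_c1122 h1.ne' h2.ne'
  have h1122 : c1122 0 0 1 2 = c1133 0 0 1 2 := by
    rw [c1122_const_lambda h1 h2, c1133_const_lambda h1 h2]
  refine ⟨0, 0, 1, 2, by norm_num, by norm_num, by norm_num, by norm_num, rfl,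
    c1212_ne_c2323 one_pos two_pos hm, c1111_ne_c3333_const_lambda h1 h2 hm, h1122, ?_⟩
  linarith
end

section
/- For a periodic isotropic two-layered medium, if λ₁ = λ₂ or μ₁ = μ₂, then the anisotropy parameter φ equals 0. -/
open Filter Real

/-- With `xᵢ = 1/(λᵢ + 2μᵢ)`, the identity `2μᵢxᵢ = 1 - λᵢxᵢ` turns `c1122 - c1133` into
`2(⟨x⟩⟨λμx⟩ - ⟨λx⟩⟨μx⟩) / ⟨x⟩`, an `x`-weighted covariance of `λ` and `μ`; for two layers it
factors as below. -/
theorem c1122_sub_c1133 {l1 l2 m1 m2 : ℝ} (ha1 : l1 + 2 * m1 ≠ 0) (ha2 : l2 + 2 * m2 ≠ 0)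
    (ha : l1 + 2 * m1 + (l2 + 2 * m2) ≠ 0) :
    c1122 l1 l2 m1 m2 - c1133 l1 l2 m1 m2 =
      (l1 - l2) * (m1 - m2) / (l1 + 2 * m1 + (l2 + 2 * m2)) := by
  have ha' : l2 + 2 * m2 + (l1 + 2 * m1) ≠ 0 := by rwa [add_comm]
  simp only [c1122, c1133, avg2]
  field_simp
  ring

theorem add_two_mul_pos_of_stable {l m : ℝ} (hm : 0 < m) (hs : 0 ≤ l + (2 / 3) * m) :
    0 < l + 2 * m := by
  linarith

theorem stmt12_general (l1 l2 m1 m2 : ℝ)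
    (hm1 : 0 < m1) (hm2 : 0 < m2)
    (hs1 : 0 ≤ l1 + (2 / 3) * m1) (hs2 : 0 ≤ l2 + (2 / 3) * m2)
    (h : l1 = l2 ∨ m1 = m2) :
    phi l1 l2 m1 m2 = 0 := by
  have ha1 := add_two_mul_pos_of_stable hm1 hs1
  have ha2 := add_two_mul_pos_of_stable hm2 hs2
  have hdiff : c1122 l1 l2 m1 m2 - c1133 l1 l2 m1 m2 = 0 := by
    rw [c1122_sub_c1133 ha1.ne' ha2.ne' (add_pos ha1 ha2).ne']
    rcases h with h | h <;> simp [h]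
  rw [phi, hdiff, zero_div]

/-- For a PITL medium, if λ₁ = λ₂ or μ₁ = μ₂, then φ = 0. -/
theorem stmt12 (l1 l2 m1 m2 : ℝ)
    (hm1 : 0 < m1) (hm2 : 0 < m2)
    (hs1 : 0 ≤ l1 + (2 / 3) * m1) (hs2 : 0 ≤ l2 + (2 / 3) * m2)
    (hden : c1122 l1 l2 m1 m2 ≠ 0)
    (h : l1 = l2 ∨ m1 = m2) :
    phi l1 l2 m1 m2 = 0 :=
  stmt12_general l1 l2 m1 m2 hm1 hm2 hs1 hs2 h
end
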